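/- arXiv:2303.14035 — 5 statements merged into one kernel-verified Lean document; each statement's English description precedes it below -/
import Mathlib

section
/- Let T_A, T_D : ℝ_{>0} → ℝ_{≥0} be non-decreasing, left-continuous functions with T_D(ν) ≥ T_A(ν) for all ν, and extend them by T_A(0) = T_D(0) = 0. Define the cumulative functions A(t) = sup{ν ≥ 0 : T_A(ν) ≤ t} and D(t) = sup{ν ≥ 0 : T_D(ν) ≤ t} (upper pseudo-inverses). Then for every t ≥ 0 with {ν : T_D(ν) ≤ t} nonempty, the age Δ(t) = t − sup{T_A(ν) : T_D(ν) ≤ t} satisfies the min-plus representation Δ(t) = sup{δ ∈ [0,t] : D(t) − A(t−δ) ≤ 0}. -/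
/-- **Min-plus (dual) representation of the age-of-information.**
Let `TA, TD` be non-decreasing, left-continuous time-stamp functions on `ℝ_{≥0}`
(values in `ℝ_{≥0}`, extended by `TA 0 = TD 0 = 0`, growing unboundedly) with
causality `TA ν ≤ TD ν`. Let `A` and `D` be the corresponding cumulative functions,
i.e., the upper pseudo-inverses `A t = sup {ν ≥ 0 : TA ν ≤ t}` and
`D t = sup {ν ≥ 0 : TD ν ≤ t}`. Then for every `t ≥ 0` the age
`Δ(t) = t − sup {TA ν : ν ≥ 0, TD ν ≤ t}` has the min-plus representation
`Δ(t) = sup {δ ∈ [0,t] : D t − A (t−δ) ≤ 0}`. -/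
theorem age_minplus_duality
    (TA TD : ℝ → ℝ)
    (hTA0 : TA 0 = 0) (hTD0 : TD 0 = 0)
    (hTAnn : ∀ ν, 0 ≤ ν → 0 ≤ TA ν) (hTDnn : ∀ ν, 0 ≤ ν → 0 ≤ TD ν)
    (hTAmono : MonotoneOn TA (Set.Ici 0)) (hTDmono : MonotoneOn TD (Set.Ici 0))
    (hTAlc : ∀ ν, 0 < ν → ContinuousWithinAt TA (Set.Iio ν) ν)
    (hTDlc : ∀ ν, 0 < ν → ContinuousWithinAt TD (Set.Iio ν) ν)
    (hTAtop : Filter.Tendsto TA Filter.atTop Filter.atTop)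
    (hTDtop : Filter.Tendsto TD Filter.atTop Filter.atTop)
    (hcaus : ∀ ν, 0 ≤ ν → TA ν ≤ TD ν)
    (A D : ℝ → ℝ)
    (hA : ∀ t, A t = sSup {ν | 0 ≤ ν ∧ TA ν ≤ t})
    (hD : ∀ t, D t = sSup {ν | 0 ≤ ν ∧ TD ν ≤ t})
    (t : ℝ) (ht : 0 ≤ t)
    (hne : {ν | 0 ≤ ν ∧ TD ν ≤ t}.Nonempty) :
    t - sSup {y | ∃ ν, 0 ≤ ν ∧ TD ν ≤ t ∧ y = TA ν} =
      sSup {δ | δ ∈ Set.Icc 0 t ∧ D t - A (t - δ) ≤ 0} := by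
  have h0S : (0:ℝ) ∈ {ν : ℝ | 0 ≤ ν ∧ TD ν ≤ t} := ⟨le_refl 0, by rw [hTD0]; exact ht⟩
  obtain ⟨N, hN⟩ := Filter.eventually_atTop.mp (Filter.tendsto_atTop.mp hTDtop (t+1))
  have hSbdd : BddAbove {ν : ℝ | 0 ≤ ν ∧ TD ν ≤ t} := by
    refine ⟨N, fun ν hν => ?_⟩
    by_contra h
    push_neg at h
    have := hN ν (le_of_lt h)
    linarith [hν.2]
  have hAbdd : ∀ x : ℝ, BddAbove {ρ : ℝ | 0 ≤ ρ ∧ TA ρ ≤ x} := by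
    intro x
    obtain ⟨M, hM⟩ := Filter.eventually_atTop.mp (Filter.tendsto_atTop.mp hTAtop (x+1))
    refine ⟨M, fun ρ hρ => ?_⟩
    by_contra h
    push_neg at h
    have := hM ρ (le_of_lt h)
    linarith [hρ.2]
  have h0Y : (0:ℝ) ∈ {y : ℝ | ∃ ν, 0 ≤ ν ∧ TD ν ≤ t ∧ y = TA ν} :=
    ⟨0, le_refl 0, by rw [hTD0]; exact ht, hTA0.symm⟩
  have hYbdd : BddAbove {y : ℝ | ∃ ν, 0 ≤ ν ∧ TD ν ≤ t ∧ y = TA ν} := by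
    refine ⟨t, fun y hy => ?_⟩
    obtain ⟨ν, hν0, hνt, rfl⟩ := hy
    exact le_trans (hcaus ν hν0) hνt
  set a := sSup {y : ℝ | ∃ ν, 0 ≤ ν ∧ TD ν ≤ t ∧ y = TA ν} with ha
  have ha0 : 0 ≤ a := le_csSup hYbdd h0Y
  have hat : a ≤ t := by
    apply csSup_le ⟨0, h0Y⟩
    rintro y ⟨ν, hν0, hνt, rfl⟩
    exact le_trans (hcaus ν hν0) hνt
  have hDA : D t ≤ A a := by
    rw [hD, hA]
    apply csSup_le ⟨0, h0S⟩
    intro ν hν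
    exact le_csSup (hAbdd a) ⟨hν.1, le_csSup hYbdd ⟨ν, hν.1, hν.2, rfl⟩⟩
  have hstrict : ∀ s : ℝ, 0 ≤ s → s < a → A s < D t := by
    intro s hs0 hsa
    obtain ⟨y, hy, hsy⟩ := exists_lt_of_lt_csSup ⟨0, h0Y⟩ hsa
    obtain ⟨ν, hν0, hνt, rfl⟩ := hy
    have hνpos : 0 < ν := by
      rcases lt_or_eq_of_le hν0 with h | h
      · exact h
      · exfalso; rw [← h, hTA0] at hsy; linarith
    have h1 : ∀ᶠ μ in nhdsWithin ν (Set.Iio ν), s < TA μ :=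
      (hTAlc ν hνpos).eventually (eventually_gt_nhds hsy)
    have h2 : ∀ᶠ μ in nhdsWithin ν (Set.Iio ν), μ ∈ Set.Ioo 0 ν :=
      Filter.eventually_of_mem (Ioo_mem_nhdsLT_of_mem ⟨hνpos, le_refl ν⟩) (fun μ hμ => hμ)
    obtain ⟨μ, hμ1, hμ2⟩ := (h1.and h2).exists
    have hAsμ : A s ≤ μ := by
      rw [hA]
      have hmem : (0:ℝ) ∈ {ρ : ℝ | 0 ≤ ρ ∧ TA ρ ≤ s} := ⟨le_refl 0, by rw [hTA0]; exact hs0⟩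
      apply csSup_le ⟨0, hmem⟩
      intro ρ hρ
      by_contra h
      push_neg at h
      have := hTAmono (le_of_lt hμ2.1) (le_trans (le_of_lt hμ2.1) (le_of_lt h)) (le_of_lt h)
      linarith [hρ.2]
    have hνD : ν ≤ D t := by
      rw [hD]; exact le_csSup hSbdd ⟨hν0, hνt⟩
    linarith [hμ2.2]
  apply le_antisymm
  · apply le_csSup
    · refine ⟨t, fun δ hδ => hδ.1.2⟩
    · refine ⟨⟨by linarith, by linarith⟩, ?_⟩
      have h : t - (t - a) = a := by ring
      rw [h]
      linarith [hDA]
  · apply csSup_le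
    · refine ⟨t - a, ⟨by linarith, by linarith⟩, ?_⟩
      have h : t - (t - a) = a := by ring
      rw [h]
      linarith [hDA]
    · intro δ hδ
      by_contra h
      push_neg at h
      have h1 : t - δ < a := by linarith
      have h2 : 0 ≤ t - δ := by linarith [hδ.1.2]
      have := hstrict (t - δ) h2 h1
      linarith [hδ.2]
end

section
/- Let S(τ,t) ≥ 0 (for 0 ≤ τ ≤ t) be a random service process on a probability space, let ρ_S > 0, b ≥ 0, ε_S(b) ≥ 0, and let l_max > 0. Define S_{P_L}(τ,t) = max(0, S(τ,t) − l_max). If for all t ≥ 0, P[∃ τ ∈ [0,t] : S(τ,t) < max(0, ρ_S(t−τ) − b)] ≤ ε_S(b), then for all t ≥ 0, P[∃ τ ∈ [0,t] : S_{P_L}(τ,t) < max(0, ρ_S(t−τ) − l_max − b)] ≤ ε_S(b). -/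
open MeasureTheory

/-- **Service process and packetizer (Cor. 2).**
If the service process `S` has lower envelope rate `ρS > 0` with underflow
probability `εS` at burstiness parameter `b ≥ 0`, then the packetized service
process `S_{P_L}(τ,t) = [S(τ,t) − l_max]_+` satisfies the corresponding envelope
with the burstiness increased by the maximal packet length `l_max`. -/
theorem service_envelope_packetizer
    {Ω : Type*} [MeasurableSpace Ω] (μ : Measure Ω) [IsProbabilityMeasure μ]
    (S : Ω → ℝ → ℝ → ℝ)
    (hSnn : ∀ ω τ t, 0 ≤ τ → τ ≤ t → 0 ≤ S ω τ t)
    (ρS b εS lmax : ℝ)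
    (hρS : 0 < ρS) (hb : 0 ≤ b) (hεS : 0 ≤ εS) (hlmax : 0 < lmax)
    (henv : ∀ t ≥ (0:ℝ),
      μ {ω | ∃ τ ∈ Set.Icc 0 t, S ω τ t < max 0 (ρS * (t - τ) - b)} ≤ ENNReal.ofReal εS) :
    ∀ t ≥ (0:ℝ),
      μ {ω | ∃ τ ∈ Set.Icc 0 t, max 0 (S ω τ t - lmax) < max 0 (ρS * (t - τ) - lmax - b)} ≤
        ENNReal.ofReal εS := by
  intro t ht
  refine le_trans (measure_mono ?_) (henv t ht)
  rintro ω ⟨τ, hτ, hlt⟩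
  refine ⟨τ, hτ, ?_⟩
  have h1 : max 0 (ρS * (t - τ) - lmax - b) = ρS * (t - τ) - lmax - b := by
    rcases le_or_gt (ρS * (t - τ) - lmax - b) 0 with h | h
    · exfalso
      have := lt_of_lt_of_le hlt (max_le le_rfl h)
      exact absurd this (not_lt.2 (le_max_left _ _))
    · exact max_eq_right h.le
  rw [h1] at hlt
  have h2 : S ω τ t - lmax < ρS * (t - τ) - lmax - b :=
    lt_of_le_of_lt (le_max_right _ _) hlt
  have : S ω τ t < ρS * (t - τ) - b := by linarith
  exact lt_of_lt_of_le this (le_max_right _ _)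
end

section
/- Let α, υ_1, υ_2 > 0 with α > 1 and υ_1 ≠ υ_2. Then for all x ≥ (ln α)/υ_1: 1 − ∫_0^x max(0, 1 − α e^{−υ_1(x−y)}) · υ_2 e^{−υ_2 y} dy = (1/(υ_1 − υ_2)) · (α^{υ_2/υ_1} υ_1 e^{−υ_2 x} − α υ_2 e^{−υ_1 x}). -/
/-!
Put `c = x - (log α) / υ₁`, so that `0 ≤ c ≤ x`. Since `α e^{-υ₁ (x - y)} ≥ 1` exactly when `y ≥ c`,
the integrand vanishes on `[c, x]`, while on `[0, c]` the positive part can be dropped and the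
integrand has the explicit antiderivative `-e^{-υ₂ y} (1 + α υ₂ e^{-υ₁ (x - y)} / (υ₁ - υ₂))`.
Evaluating it uses `α e^{-υ₁ (x - c)} = 1` and `e^{-υ₂ c} = α^{υ₂/υ₁} e^{-υ₂ x}`.
-/

open Real Set MeasureTheory intervalIntegral

lemma mul_exp_neg_mul_eq_exp {α : ℝ} (hα : 0 < α) {υ : ℝ} (hυ : υ ≠ 0) (t : ℝ) :
    α * exp (-υ * t) = exp (υ * (log α / υ - t)) := by
  rw [mul_sub, mul_div_cancel₀ _ hυ, sub_eq_add_neg, exp_add, exp_log hα, neg_mul]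

lemma max_zero_one_sub_mul_exp_neg_mul_of_le {α υ t : ℝ} (hα : 0 < α) (hυ : 0 < υ)
    (ht : t ≤ log α / υ) :
    max 0 (1 - α * exp (-υ * t)) = 0 := by
  refine max_eq_left ?_
  rwa [sub_nonpos, mul_exp_neg_mul_eq_exp hα hυ.ne', one_le_exp_iff,
    mul_nonneg_iff_of_pos_left hυ, sub_nonneg]

lemma max_zero_one_sub_mul_exp_neg_mul_of_ge {α υ t : ℝ} (hα : 0 < α) (hυ : 0 < υ)
    (ht : log α / υ ≤ t) :
    max 0 (1 - α * exp (-υ * t)) = 1 - α * exp (-υ * t) := by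
  refine max_eq_right ?_
  rwa [sub_nonneg, mul_exp_neg_mul_eq_exp hα hυ.ne', exp_le_one_iff, ← neg_nonneg, ← mul_neg,
    mul_nonneg_iff_of_pos_left hυ, neg_nonneg, sub_nonpos]

lemma exp_neg_mul_sub_log_div_eq_rpow_mul {α : ℝ} (hα : 0 < α) (υ₁ υ₂ x : ℝ) :
    exp (-υ₂ * (x - log α / υ₁)) = α ^ (υ₂ / υ₁) * exp (-υ₂ * x) := by
  rw [rpow_def_of_pos hα, ← exp_add]
  ring_nf

lemma intervalIntegral_eq_of_eqOn_zero {f : ℝ → ℝ} {a b c : ℝ}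
    (hab : IntervalIntegrable f volume a b) (hbc : IntervalIntegrable f volume b c)
    (hf : EqOn f 0 (uIcc b c)) : ∫ y in a..c, f y = ∫ y in a..b, f y := by
  rw [← integral_add_adjacent_intervals hab hbc, integral_congr hf, Pi.zero_def,
    intervalIntegral.integral_zero, add_zero]

lemma hasDerivAt_neg_exp_mul_one_add_exp {α υ₁ υ₂ : ℝ} (hne : υ₁ ≠ υ₂) (x y : ℝ) :
    HasDerivAt
      (fun y => -exp (-υ₂ * y) * (1 + α * υ₂ / (υ₁ - υ₂) * exp (-υ₁ * (x - y))))
      ((1 - α * exp (-υ₁ * (x - y))) * (υ₂ * exp (-υ₂ * y))) y := by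
  have h₂ : HasDerivAt (fun y => exp (-υ₂ * y)) (exp (-υ₂ * y) * -υ₂) y := by
    simpa using ((hasDerivAt_id y).const_mul (-υ₂)).exp
  have h₁ : HasDerivAt (fun y => exp (-υ₁ * (x - y))) (exp (-υ₁ * (x - y)) * υ₁) y := by
    simpa using (((hasDerivAt_id y).const_sub x).const_mul (-υ₁)).exp
  refine (h₂.neg.mul ((h₁.const_mul (α * υ₂ / (υ₁ - υ₂))).const_add 1)).congr_deriv ?_
  have : υ₁ - υ₂ ≠ 0 := sub_ne_zero.mpr hne
  simp only [Pi.neg_apply]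
  field_simp
  ring

theorem stieltjes_conv_gt_one_distinct_rates_general
    (α υ₁ υ₂ : ℝ) (hα : 1 < α) (hυ₁ : 0 < υ₁)
    (hne : υ₁ ≠ υ₂) (x : ℝ) (hx : Real.log α / υ₁ ≤ x) :
    1 - ∫ y in (0:ℝ)..x,
        max 0 (1 - α * Real.exp (-υ₁ * (x - y))) * (υ₂ * Real.exp (-υ₂ * y)) =
      (α ^ (υ₂ / υ₁) * υ₁ * Real.exp (-υ₂ * x) - α * υ₂ * Real.exp (-υ₁ * x)) /
        (υ₁ - υ₂) := by
  have hα₀ : 0 < α := one_pos.trans hα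
  set c := x - log α / υ₁ with hc
  have hc₀ : 0 ≤ c := sub_nonneg.mpr hx
  have hcx : c ≤ x := sub_le_self _ (div_nonneg (log_nonneg hα.le) hυ₁.le)
  set f := fun y => max 0 (1 - α * exp (-υ₁ * (x - y))) * (υ₂ * exp (-υ₂ * y))
  have hf : ∀ a b, IntervalIntegrable f volume a b :=
    fun a b => by apply Continuous.intervalIntegrable; fun_prop
  have hvanish : EqOn f 0 (uIcc c x) := fun y hy => by
    rw [uIcc_of_le hcx] at hy
    simp only [f, max_zero_one_sub_mul_exp_neg_mul_of_le hα₀ hυ₁ (by linarith [hy.1] :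
      x - y ≤ log α / υ₁), zero_mul, Pi.zero_apply]
  have hactive : EqOn f (fun y => (1 - α * exp (-υ₁ * (x - y))) * (υ₂ * exp (-υ₂ * y)))
      (uIcc 0 c) := fun y hy => by
    rw [uIcc_of_le hc₀] at hy
    simp only [f, max_zero_one_sub_mul_exp_neg_mul_of_ge hα₀ hυ₁ (by linarith [hy.2] :
      log α / υ₁ ≤ x - y)]
  rw [intervalIntegral_eq_of_eqOn_zero (hf 0 c) (hf c x) hvanish, integral_congr hactive,
    integral_eq_sub_of_hasDerivAt (fun y _ => hasDerivAt_neg_exp_mul_one_add_exp hne x y)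
      (by apply Continuous.intervalIntegrable; fun_prop)]
  have hαc : α * exp (-υ₁ * (x - c)) = 1 := by
    rw [mul_exp_neg_mul_eq_exp hα₀ hυ₁.ne', hc, sub_sub_cancel, sub_self, mul_zero, exp_zero]
  have hexpc : exp (-υ₂ * c) = α ^ (υ₂ / υ₁) * exp (-υ₂ * x) :=
    exp_neg_mul_sub_log_div_eq_rpow_mul hα₀ υ₁ υ₂ x
  rw [mul_zero, exp_zero, sub_zero, eq_div_iff (sub_ne_zero.mpr hne)]
  field_simp
  simp only [neg_mul] at hαc hexpc
  linear_combination (exp (-(υ₂ * c)) * υ₂) * hαc + υ₁ * hexpc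

/-- **Stieltjes convolution identity, case `α > 1`, distinct rates (Lem. 1).**
With `ε₁(x) = α e^{−υ₁x}` and `ε₂(x) = e^{−υ₂x}`, `υ₁ ≠ υ₂`, for all `x ≥ (ln α)/υ₁`,
`1 − [1−ε₁]_+ ∗ (1−ε₂)(x) = (α^{υ₂/υ₁} υ₁ e^{−υ₂x} − α υ₂ e^{−υ₁x})/(υ₁−υ₂)`. -/
theorem stieltjes_conv_gt_one_distinct_rates
    (α υ₁ υ₂ : ℝ) (hα : 1 < α) (hυ₁ : 0 < υ₁) (hυ₂ : 0 < υ₂)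
    (hne : υ₁ ≠ υ₂) (x : ℝ) (hx : Real.log α / υ₁ ≤ x) :
    1 - ∫ y in (0:ℝ)..x,
        max 0 (1 - α * Real.exp (-υ₁ * (x - y))) * (υ₂ * Real.exp (-υ₂ * y)) =
      (α ^ (υ₂ / υ₁) * υ₁ * Real.exp (-υ₂ * x) - α * υ₂ * Real.exp (-υ₁ * x)) /
        (υ₁ - υ₂) :=
  stieltjes_conv_gt_one_distinct_rates_general α υ₁ υ₂ hα hυ₁ hne x hx
end

section
/- Let A : ℝ_{≥0} → ℝ with A(τ,t) := A(t) − A(τ), let S_{P_L}(τ,t) be real-valued for 0 ≤ τ ≤ t, let t ≥ x ≥ 0, and suppose D(t) ≥ inf_{τ∈[0,t]}{A(τ) + S_{P_L}(τ,t)}. Then A(t−x) − D(t) ≤ max( sup_{τ∈[0,t−x]}{A(τ,t−x) − S_{P_L}(τ,t)}, sup_{τ∈[t−x,t]}{−A(t−x,τ) − S_{P_L}(τ,t)} ). -/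
open Set

theorem sub_csInf_image {α : Type*} (f : α → ℝ) {s : Set α} (hs : s.Nonempty)
    (hf : BddBelow (f '' s)) (c : ℝ) :
    c - sInf (f '' s) = sSup ((fun a => c - f a) '' s) := by
  rw [Antitone.map_csInf_of_continuousAt (continuous_sub_left c).continuousAt
    (fun _ _ h => sub_le_sub_left h c) (hs.image f) hf, image_image]

/-- No boundedness is needed: `csSup_union_le` also covers the junk value of `sSup` on
unbounded sets. -/
theorem csSup_image_Icc_le_max {α β : Type*} [LinearOrder α] [ConditionallyCompleteLinearOrder β]
    (g : α → β) {a b c : α} (hab : a ≤ b) (hbc : b ≤ c) :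
    sSup (g '' Icc a c) ≤ max (sSup (g '' Icc a b)) (sSup (g '' Icc b c)) := by
  rw [← Icc_union_Icc_eq_Icc hab hbc, image_union]
  exact csSup_union_le _ _

/-- **Splitting the min-plus convolution at `τ = t−x`.**
If `D(t) ≥ inf_{τ∈[0,t]} {A(τ) + S_{P_L}(τ,t)}`, then
`A(t−x) − D(t) ≤ max(sup_{τ∈[0,t−x]} {A(τ,t−x) − S_{P_L}(τ,t)},
sup_{τ∈[t−x,t]} {−A(t−x,τ) − S_{P_L}(τ,t)})`, where `A(τ,t) = A(t) − A(τ)`. -/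
theorem minplus_split
    (A : ℝ → ℝ) (SPL : ℝ → ℝ → ℝ) (D : ℝ → ℝ)
    (t x : ℝ) (hx : 0 ≤ x) (hxt : x ≤ t)
    (hbdd : BddBelow ((fun τ => A τ + SPL τ t) '' Set.Icc 0 t))
    (hD : sInf ((fun τ => A τ + SPL τ t) '' Set.Icc 0 t) ≤ D t) :
    A (t - x) - D t ≤
      max (sSup ((fun τ => (A (t - x) - A τ) - SPL τ t) '' Set.Icc 0 (t - x)))
          (sSup ((fun τ => -(A τ - A (t - x)) - SPL τ t) '' Set.Icc (t - x) t)) := by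
  set g : ℝ → ℝ := fun τ => A (t - x) - (A τ + SPL τ t)
  have hg : g = fun τ => A (t - x) - A τ - SPL τ t := funext fun τ => sub_add_eq_sub_sub ..
  simp only [neg_sub, ← hg]
  calc A (t - x) - D t
      ≤ A (t - x) - sInf ((fun τ => A τ + SPL τ t) '' Icc 0 t) := sub_le_sub_left hD _
    _ = sSup (g '' Icc 0 t) := sub_csInf_image _ (nonempty_Icc.2 (hx.trans hxt)) hbdd _
    _ ≤ _ := csSup_image_Icc_le_max g (by linarith) (by linarith)
end

section
/- Let l, w > 0, o ∈ [0,w), A(t) = l·⌊(t+o)/w⌋ for t ≥ 0, with A(τ,t) := A(t) − A(τ), and let ρ_S ≥ l/w, t ≥ x ≥ 0. Then sup_{τ∈[0,t−x]}{A(τ,t−x) − ρ_S(t−τ) + l} ≤ −ρ_S x + max(0, l − ρ_S·((t−x+o) mod w)) + l. -/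
/-- **The burstiness term `β` for periodic arrivals.**
For the periodic cumulative arrival function `A(t) = l⌊(t+o)/w⌋` with `l, w > 0`,
`o ∈ [0,w)`, stability `ρ_S ≥ l/w`, and `t ≥ x ≥ 0`, it holds that
`sup_{τ∈[0,t−x]} {A(τ,t−x) − ρ_S(t−τ) + l} ≤ −ρ_S x + [l − ρ_S((t−x+o) mod w)]_+ + l`. -/
theorem periodic_beta_bound
    (l w o ρS : ℝ) (hl : 0 < l) (hw : 0 < w) (ho : o ∈ Set.Ico 0 w)
    (hρ : l / w ≤ ρS)
    (A : ℝ → ℝ) (hA : ∀ t, A t = l * (⌊(t + o) / w⌋ : ℝ))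
    (t x : ℝ) (hx : 0 ≤ x) (hxt : x ≤ t) :
    sSup ((fun τ => (A (t - x) - A τ) - ρS * (t - τ) + l) '' Set.Icc 0 (t - x)) ≤
      -(ρS * x) +
        max 0 (l - ρS * ((t - x + o) - w * (⌊(t - x + o) / w⌋ : ℝ))) + l := by
  have hρ0 : 0 < ρS := lt_of_lt_of_le (div_pos hl hw) hρ
  have hlw : l ≤ ρS * w := by
    rw [div_le_iff₀ hw] at hρ; linarith
  have hs : 0 ≤ t - x := sub_nonneg.2 hxt
  refine csSup_le (Set.Nonempty.image _ ⟨0, Set.left_mem_Icc.2 hs⟩) ?_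
  rintro y ⟨τ, ⟨hτ0, hτs⟩, rfl⟩
  simp only [hA]
  set ns : ℤ := ⌊(t - x + o) / w⌋ with hns
  set nτ : ℤ := ⌊(τ + o) / w⌋ with hnτ
  have hmono : nτ ≤ ns := Int.floor_le_floor (by gcongr <;> linarith)
  have h1 : w * (nτ : ℝ) ≤ τ + o := by
    have := Int.floor_le ((τ + o) / w)
    rw [le_div_iff₀ hw] at this; linarith
  have h2 : τ + o < w * ((nτ : ℝ) + 1) := by
    have := Int.lt_floor_add_one ((τ + o) / w)
    rw [div_lt_iff₀ hw] at this; linarith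
  have h3 : w * (ns : ℝ) ≤ t - x + o := by
    have := Int.floor_le ((t - x + o) / w)
    rw [le_div_iff₀ hw] at this; linarith
  rcases eq_or_lt_of_le hmono with h | h
  · have hmax : (0 : ℝ) ≤ max 0 (l - ρS * ((t - x + o) - w * (ns : ℝ))) := le_max_left _ _
    rw [show (nτ : ℝ) = (ns : ℝ) from by exact_mod_cast h]
    nlinarith [mul_le_mul_of_nonneg_left (show x ≤ t - τ by linarith) hρ0.le]
  · have hn1 : (nτ : ℝ) + 1 ≤ (ns : ℝ) := by exact_mod_cast h
    have hmax : l - ρS * ((t - x + o) - w * (ns : ℝ)) ≤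
        max 0 (l - ρS * ((t - x + o) - w * (ns : ℝ))) := le_max_right _ _
    nlinarith [mul_le_mul_of_nonneg_left (sub_le_sub hn1 (le_refl (1:ℝ)))
      (le_of_lt hρ0), mul_le_mul_of_nonneg_left hlw (sub_nonneg.2 (by linarith : (1:ℝ) ≤ (ns:ℝ) - (nτ:ℝ)))]
end
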